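/- arXiv:1503.08008 — 3 statements merged into one kernel-verified Lean document; each statement's English description precedes it below -/
import Mathlib

section
/- For any probability vector λ ∈ Δ_{nk} (with n, k ≥ 2) whose largest entry λ₁ satisfies λ₁ ≤ (k+1)·λ_{nk}, where λ_{nk} is the smallest entry, and for any vector x ∈ Δ_{min(n,k)} with associated 'hat' vector x̂ ∈ ℝ^{nk}, one has ⟨λ^↓, x̂^↑⟩ ≥ 0, where λ^↓ is λ sorted decreasingly and x̂^↑ is x̂ sorted increasingly. -/
/-!
Every entry of `λ` lies between `m = λ_{nk}` and `L = λ₁ ≤ (k+1)m`. The `k - 1` copies of each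
`x_j` are paired with entries `≥ m` and carry total mass `1`, contributing at least `(k-1)m`.
The `η_i` with `i < r` are nonnegative with total mass `t = -η_r ≤ 1 - 1/r`; pairing them with
entries `≥ m` and `η_r` with `L` contributes at least `t(m - L) ≥ (1 - 1/r)(m - L) ≥ -(1 - 1/r)km`.
The total is therefore at least `m(k/r - 1) ≥ 0`, as `r ≤ k`.
-/

open Finset

theorem Finset.le_sum_mul_of_forall_le {ι : Type*} {s : Finset ι} {w f : ι → ℝ} {c : ℝ}
    (hw : ∀ j ∈ s, 0 ≤ w j) (hw_sum : ∑ j ∈ s, w j = 1) (hf : ∀ j ∈ s, c ≤ f j) :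
    c ≤ ∑ j ∈ s, w j * f j :=
  calc c = ∑ j ∈ s, w j * c := by rw [← sum_mul, hw_sum, one_mul]
    _ ≤ ∑ j ∈ s, w j * f j := sum_le_sum fun j hj => mul_le_mul_of_nonneg_left (hf j hj) (hw j hj)

theorem Finset.mul_sub_le_sum_mul_sub_sum_mul {ι : Type*} {s : Finset ι} {η μ : ι → ℝ}
    {m L c : ℝ} (hη : ∀ j ∈ s, 0 ≤ η j) (hμ : ∀ j ∈ s, m ≤ μ j) (hmL : m ≤ L)
    (hc : ∑ j ∈ s, η j ≤ c) :
    c * (m - L) ≤ ∑ j ∈ s, η j * μ j - (∑ j ∈ s, η j) * L := by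
  have hmass : (∑ j ∈ s, η j) * m ≤ ∑ j ∈ s, η j * μ j := by
    rw [sum_mul]
    exact sum_le_sum fun j hj => mul_le_mul_of_nonneg_left (hμ j hj) (hη j hj)
  nlinarith

theorem block_index_lt {n k j i : ℕ} (hj : j < n) (hi : i < k) : (n - 1 - j) * k + i < n * k := by
  have : (n - 1 - j + 1) * k ≤ n * k := Nat.mul_le_mul_right k (by omega)
  rw [add_mul, one_mul] at this
  omega

theorem nonneg_of_le_add_one_mul {m L r k : ℝ} (hm : 0 ≤ m) (hL : L ≤ (k + 1) * m)
    (hr1 : 1 ≤ r) (hrk : r ≤ k) : 0 ≤ (k - 1) * m + (1 - 1 / r) * (m - L) := by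
  have hr : 0 < r := one_pos.trans_le hr1
  have hkr : 0 ≤ m * (k / r - 1) := mul_nonneg hm (by rw [sub_nonneg, one_le_div hr]; exact hrk)
  have hexpand : (k - 1) * m + (1 - 1 / r) * (m - (k + 1) * m) = m * (k / r - 1) := by
    field_simp; ring
  have h1r : 0 ≤ 1 - 1 / r := sub_nonneg.mpr ((div_le_one hr).mpr hr1)
  nlinarith [mul_le_mul_of_nonneg_left hL h1r]

theorem stmt0_general (n k r : ℕ)
    (hr1 : 1 ≤ r) (hrm : r ≤ min n k)
    (lam : ℕ → ℝ)
    (hlam_mono : ∀ i j, i ≤ j → j < n * k → lam j ≤ lam i)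
    (hlam_nonneg : ∀ i, i < n * k → 0 ≤ lam i)
    (hcond : lam 0 ≤ (k + 1) * lam (n * k - 1))
    (x : ℕ → ℝ)
    (hx_pos : ∀ i, i < r → 0 < x i)
    (hx_sum : ∑ i ∈ Finset.range r, x i = 1)
    (η : ℕ → ℝ)
    (hη_inter : ∀ i, i + 1 < r → x (i + 1) ≤ η i ∧ η i ≤ x i)
    (hη_last : η (r - 1) = -∑ i ∈ Finset.range (r - 1), η i)
    (hη_bound : -η (r - 1) ≤ (1 - 1 / (r : ℝ)) * ∑ i ∈ Finset.range r, x i) :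
    0 ≤ (∑ j ∈ Finset.range r,
          x j * ∑ i ∈ Finset.range (k - 1), lam ((n - 1 - j) * k + 1 + i))
        + (∑ j ∈ Finset.range (r - 1), η j * lam ((n - 1 - j) * k))
        + η (r - 1) * lam 0 := by
  obtain ⟨hrn, hrk⟩ := le_min_iff.mp hrm
  have hnk : 0 < n * k := Nat.mul_pos (by omega) (by omega)
  have hmin : ∀ j < n, ∀ i < k, lam (n * k - 1) ≤ lam ((n - 1 - j) * k + i) :=
    fun j hj i hi => hlam_mono _ _ (by have := block_index_lt hj hi; omega) (by omega)
  have hblocks : ((k : ℝ) - 1) * lam (n * k - 1) ≤ ∑ j ∈ range r,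
      x j * ∑ i ∈ range (k - 1), lam ((n - 1 - j) * k + 1 + i) := by
    refine le_sum_mul_of_forall_le (fun j hj => (hx_pos j (mem_range.mp hj)).le) hx_sum
      fun j hj => ?_
    have := card_nsmul_le_sum (range (k - 1)) (fun i => lam ((n - 1 - j) * k + 1 + i)) _
      fun i hi => by
        simpa [add_assoc] using hmin j (by simp at hj; omega) (1 + i) (by simp at hi; omega)
    rwa [card_range, nsmul_eq_mul, Nat.cast_sub (by omega : 1 ≤ k), Nat.cast_one] at this
  have hseparators := mul_sub_le_sum_mul_sub_sum_mul (s := range (r - 1))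
    (μ := fun j => lam ((n - 1 - j) * k))
    (fun j hj => (hx_pos (j + 1) (by simp at hj; omega)).le.trans
      (hη_inter j (by simp at hj; omega)).1)
    (fun j hj => by simpa using hmin j (by simp at hj; omega) 0 (by omega))
    (hlam_mono 0 _ (by omega) (by omega))
    (show _ ≤ 1 - 1 / (r : ℝ) by rw [hx_sum, mul_one] at hη_bound; linarith)
  rw [← neg_eq_iff_eq_neg.mpr hη_last, neg_mul, sub_neg_eq_add] at hseparators
  have hbalance := nonneg_of_le_add_one_mul (r := r) (hlam_nonneg _ (by omega)) hcond
    (Nat.one_le_cast.mpr hr1) (Nat.cast_le.mpr hrk)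
  linarith

/-- For a probability vector `lam ∈ Δ_{nk}` (sorted decreasingly) with
`λ₁ ≤ (k+1)·λ_{nk}`, and any `x ∈ Δ_{min(n,k)}` of rank `r` with hat vector data `η`,
the inner product `⟨λ^↓, x̂^↑⟩ ≥ 0`. The inner product is written out blockwise. -/
theorem stmt0 (n k r : ℕ) (hn : 2 ≤ n) (hk : 2 ≤ k)
    (hr1 : 1 ≤ r) (hrm : r ≤ min n k)
    (lam : ℕ → ℝ)
    (hlam_mono : ∀ i j, i ≤ j → j < n * k → lam j ≤ lam i)
    (hlam_nonneg : ∀ i, i < n * k → 0 ≤ lam i)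
    (hlam_sum : ∑ i ∈ Finset.range (n * k), lam i = 1)
    (hcond : lam 0 ≤ (k + 1) * lam (n * k - 1))
    (x : ℕ → ℝ)
    (hx_mono : ∀ i j, i ≤ j → j < r → x j ≤ x i)
    (hx_pos : ∀ i, i < r → 0 < x i)
    (hx_sum : ∑ i ∈ Finset.range r, x i = 1)
    (η : ℕ → ℝ)
    (hη_inter : ∀ i, i + 1 < r → x (i + 1) ≤ η i ∧ η i ≤ x i)
    (hη_last : η (r - 1) = -∑ i ∈ Finset.range (r - 1), η i)
    (hη_bound : -η (r - 1) ≤ (1 - 1 / (r : ℝ)) * ∑ i ∈ Finset.range r, x i) :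
    0 ≤ (∑ j ∈ Finset.range r,
          x j * ∑ i ∈ Finset.range (k - 1), lam ((n - 1 - j) * k + 1 + i))
        + (∑ j ∈ Finset.range (r - 1), η j * lam ((n - 1 - j) * k))
        + η (r - 1) * lam 0 :=
  stmt0_general n k r hr1 hrm lam hlam_mono hlam_nonneg hcond x hx_pos hx_sum η hη_inter hη_last
    hη_bound
end

section
/- For n, k ≥ 2 and a probability vector λ ∈ Δ_{nk}: if the number of nonzero entries of λ satisfies rk λ ≤ (n−2)k+1, then λ does not belong to ARED_{n,k}, i.e., there exists x ∈ Δ_{min(n,k)} with ⟨λ^↓, x̂^↑⟩ < 0. Equivalently, every λ ∈ ARED_{n,k} satisfies rk λ ≥ (n−2)k+2. -/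
/-! A decreasing probability vector with at most `(n-2)k+1` nonzero entries vanishes from index
`(n-2)k+1` on, so against the witness `x = (1/2,1/2,0,…,0)` only the entry `-1/2` of `x̂^↑` meets a
nonzero entry of `λ^↓`, namely `λ₀ > 0`, and the pairing is `-λ₀/2 < 0`. -/

open Finset

section AntitoneVector

variable {N : ℕ} {lam : ℕ → ℝ}

/-- By monotonicity, `lam i ≠ 0` makes `lam 0, …, lam i` all nonzero, forcing `i < m`. -/
theorem eq_zero_of_card_support_le (hmono : ∀ i j, i ≤ j → j < N → lam j ≤ lam i)
    (hnonneg : ∀ i, i < N → 0 ≤ lam i) {m : ℕ} (hcard : #{i ∈ range N | lam i ≠ 0} ≤ m)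
    {i : ℕ} (hmi : m ≤ i) (hiN : i < N) : lam i = 0 := by
  by_contra hne
  have hpos : 0 < lam i := (hnonneg i hiN).lt_of_ne' hne
  have hsub : range (i + 1) ⊆ {j ∈ range N | lam j ≠ 0} := by
    intro j hj
    rw [mem_range] at hj
    rw [mem_filter, mem_range]
    exact ⟨by omega, (hpos.trans_le (hmono j i (by omega) hiN)).ne'⟩
  have := card_le_card hsub
  rw [card_range] at this
  omega

theorem sum_Ico_eq_zero_of_card_support_le (hmono : ∀ i j, i ≤ j → j < N → lam j ≤ lam i)
    (hnonneg : ∀ i, i < N → 0 ≤ lam i) {m : ℕ} (hcard : #{i ∈ range N | lam i ≠ 0} ≤ m) :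
    ∑ i ∈ Ico m N, lam i = 0 :=
  sum_eq_zero fun _ hi =>
    eq_zero_of_card_support_le hmono hnonneg hcard (mem_Ico.1 hi).1 (mem_Ico.1 hi).2

theorem pos_zero_of_sum_range_eq_one (hmono : ∀ i j, i ≤ j → j < N → lam j ≤ lam i)
    (hsum : ∑ i ∈ range N, lam i = 1) : 0 < lam 0 := by
  by_contra! h
  have : ∑ i ∈ range N, lam i ≤ 0 :=
    sum_nonpos fun i hi => (hmono 0 i i.zero_le (mem_range.1 hi)).trans h
  linarith

end AntitoneVector

theorem stmt2_general (n k : ℕ)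
    (lam : ℕ → ℝ)
    (hlam_mono : ∀ i j, i ≤ j → j < n * k → lam j ≤ lam i)
    (hlam_nonneg : ∀ i, i < n * k → 0 ≤ lam i)
    (hlam_sum : ∑ i ∈ Finset.range (n * k), lam i = 1)
    (hrk : ((Finset.range (n * k)).filter (fun i => lam i ≠ 0)).card ≤ (n - 2) * k + 1) :
    ¬ (0 ≤ (-(1 / 2)) * lam 0
        + (1 / 2) * ∑ i ∈ Finset.Ico ((n - 2) * k + 1) (n * k), lam i) := by
  rw [sum_Ico_eq_zero_of_card_support_le hlam_mono hlam_nonneg hrk]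
  have := pos_zero_of_sum_range_eq_one hlam_mono hlam_sum
  linarith

/-- If a probability vector `lam ∈ Δ_{nk}` (sorted decreasingly) has at most
`(n−2)k+1` nonzero entries, then `lam ∉ ARED_{n,k}`: the witness `x = (1/2,1/2,0,…,0)`,
whose hat vector has `2k−1` entries `1/2`, `(n−2)k` zeros and one entry `−1/2`,
yields `⟨λ^↓, x̂^↑⟩ < 0`. -/
theorem stmt2 (n k : ℕ) (hn : 2 ≤ n) (hk : 2 ≤ k)
    (lam : ℕ → ℝ)
    (hlam_mono : ∀ i j, i ≤ j → j < n * k → lam j ≤ lam i)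
    (hlam_nonneg : ∀ i, i < n * k → 0 ≤ lam i)
    (hlam_sum : ∑ i ∈ Finset.range (n * k), lam i = 1)
    (hrk : ((Finset.range (n * k)).filter (fun i => lam i ≠ 0)).card ≤ (n - 2) * k + 1) :
    ¬ (0 ≤ (-(1 / 2)) * lam 0
        + (1 / 2) * ∑ i ∈ Finset.Ico ((n - 2) * k + 1) (n * k), lam i) :=
  stmt2_general n k lam hlam_mono hlam_nonneg hlam_sum hrk
end

section
/- Let λ ∈ Δ_{nk} be sorted decreasingly (n, k ≥ 2, r = min(n,k) ≥ 2), and x ∈ Δ_r sorted decreasingly with rank r, with hat vector x̂ as in the hat operation (η_i satisfying x_i ≥ η_i ≥ x_{i+1}, η_r = −∑_{i<r}η_i ≥ −(1 − 1/r)). Then ⟨λ^↓, x̂^↑⟩ ≥ (k−1)·λ_{nk} + η_r·(λ₁ − λ_{nk}) ≥ ((k−1)/k)·((k+1)λ_{nk} − λ₁). -/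
/-!
Every entry of `λ` that meets a positive weight of `x̂` is at least `λ_{nk}`. The weights `x_j`
total `1` and each meets a block of `k - 1` entries, the weights `η_j` (`j < r`) are positive
and total `-η_r`, and `η_r` meets `λ₁`; this gives the first bound. The second one follows from
`η_r ≥ -(1 - 1/r) ≥ -(1 - 1/k)`, since `λ₁ - λ_{nk} ≥ 0`.
-/

open Finset

theorem Finset.sum_mul_le_sum_mul_of_le {ι : Type*} {s : Finset ι} {w f : ι → ℝ} {c : ℝ}
    (hw : ∀ i ∈ s, 0 ≤ w i) (hf : ∀ i ∈ s, c ≤ f i) :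
    (∑ i ∈ s, w i) * c ≤ ∑ i ∈ s, w i * f i := by
  rw [Finset.sum_mul]
  exact sum_le_sum fun i hi => mul_le_mul_of_nonneg_left (hf i hi) (hw i hi)

theorem le_sum_mul_add_sum_mul_add_mul {ι κ : Type*} {s : Finset ι} {t : Finset κ}
    {x B : ι → ℝ} {η a : κ → ℝ} {c L M e : ℝ}
    (hx : ∀ j ∈ s, 0 ≤ x j) (hx_sum : ∑ j ∈ s, x j = 1) (hB : ∀ j ∈ s, c ≤ B j)
    (hη : ∀ j ∈ t, 0 ≤ η j) (hη_sum : e = -∑ j ∈ t, η j) (ha : ∀ j ∈ t, L ≤ a j) :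
    c + e * (M - L) ≤ ∑ j ∈ s, x j * B j + ∑ j ∈ t, η j * a j + e * M := by
  have hxB := sum_mul_le_sum_mul_of_le hx hB
  have hηa := sum_mul_le_sum_mul_of_le hη ha
  rw [hx_sum] at hxB
  rw [hη_sum]
  linarith

theorem mul_sub_le_of_neg_one_sub_inv_le {k L M e : ℝ} (hk : 0 < k) (hLM : L ≤ M)
    (he : -(1 - 1 / k) ≤ e) :
    (k - 1) / k * ((k + 1) * L - M) ≤ (k - 1) * L + e * (M - L) :=
  calc (k - 1) / k * ((k + 1) * L - M) = (k - 1) * L + -(1 - 1 / k) * (M - L) := by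
        field_simp; ring
    _ ≤ (k - 1) * L + e * (M - L) := by gcongr

theorem stmt18_general (n k : ℕ)
    (r : ℕ) (hr : r = min n k) (hr2 : 2 ≤ r)
    (lam : ℕ → ℝ)
    (hlam_mono : ∀ i j, i ≤ j → j < n * k → lam j ≤ lam i)
    (x : ℕ → ℝ)
    (hx_pos : ∀ i, i < r → 0 < x i)
    (hx_sum : ∑ i ∈ Finset.range r, x i = 1)
    (η : ℕ → ℝ)
    (hη_inter : ∀ i, i + 1 < r → x (i + 1) ≤ η i ∧ η i ≤ x i)
    (hη_last : η (r - 1) = -∑ i ∈ Finset.range (r - 1), η i)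
    (hη_bound : -(1 - 1 / (r : ℝ)) ≤ η (r - 1)) :
    ((k : ℝ) - 1) * lam (n * k - 1) + η (r - 1) * (lam 0 - lam (n * k - 1))
      ≤ (∑ j ∈ Finset.range r,
            x j * ∑ i ∈ Finset.range (k - 1), lam ((n - 1 - j) * k + 1 + i))
          + (∑ j ∈ Finset.range (r - 1), η j * lam ((n - 1 - j) * k))
          + η (r - 1) * lam 0
    ∧ (((k : ℝ) - 1) / k) * (((k : ℝ) + 1) * lam (n * k - 1) - lam 0)
      ≤ ((k : ℝ) - 1) * lam (n * k - 1) + η (r - 1) * (lam 0 - lam (n * k - 1)) := by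
  have hrn : r ≤ n := hr ▸ min_le_left n k
  have hrk : r ≤ k := hr ▸ min_le_right n k
  have hmin : ∀ m < n * k, lam (n * k - 1) ≤ lam m := fun m hm =>
    hlam_mono m _ (by omega) (by omega)
  have hblock : ∀ j ∈ range r,
      ((k : ℝ) - 1) * lam (n * k - 1) ≤ ∑ i ∈ range (k - 1), lam ((n - 1 - j) * k + 1 + i) := by
    intro j hj
    have hcard : ((k : ℝ) - 1) = ((range (k - 1)).card : ℝ) := by
      rw [card_range, Nat.cast_sub (by omega), Nat.cast_one]
    rw [hcard, ← nsmul_eq_mul]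
    refine card_nsmul_le_sum _ _ _ fun i hi => hmin _ ?_
    rw [add_assoc]
    exact block_index_lt (by simp at hj; omega) (by simp at hi; omega)
  refine ⟨le_sum_mul_add_sum_mul_add_mul (fun j hj => (hx_pos j (by simpa using hj)).le) hx_sum
    hblock (fun j hj => ?_) hη_last (fun j hj => hmin _ ?_), ?_⟩
  · rw [mem_range] at hj
    exact (hx_pos (j + 1) (by omega)).le.trans (hη_inter j (by omega)).1
  · simpa using block_index_lt (k := k) (i := 0) (by simp at hj; omega) (by omega)
  · have hr0 : (0 : ℝ) < r := by positivity
    have hinv : 1 / (k : ℝ) ≤ 1 / r := one_div_le_one_div_of_le hr0 (by exact_mod_cast hrk)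
    exact mul_sub_le_of_neg_one_sub_inv_le (hr0.trans_le (by exact_mod_cast hrk))
      (hmin 0 (Nat.mul_pos (by omega) (by omega))) (by linarith)

/-- For a decreasingly sorted probability vector `lam ∈ Δ_{nk}` and
`x ∈ Δ_r` (`r = min(n,k) ≥ 2`) sorted decreasingly of rank `r`, with hat data `η`
(`x_{i+1} ≤ η_i ≤ x_i`, `η_r = −∑_{i<r} η_i ≥ −(1 − 1/r)`), the blockwise inner product
`⟨λ^↓, x̂^↑⟩ = ∑_j x_j·(λ_{(n−j+1)k}+⋯+λ_{(n−j)k+2}) + ∑_{j<r} η_j·λ_{(n−j)k+1} + η_r·λ₁`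
satisfies `⟨λ^↓, x̂^↑⟩ ≥ (k−1)·λ_{nk} + η_r·(λ₁ − λ_{nk}) ≥ ((k−1)/k)·((k+1)λ_{nk} − λ₁)`. -/
theorem stmt18 (n k : ℕ) (hn : 2 ≤ n) (hk : 2 ≤ k)
    (r : ℕ) (hr : r = min n k) (hr2 : 2 ≤ r)
    (lam : ℕ → ℝ)
    (hlam_mono : ∀ i j, i ≤ j → j < n * k → lam j ≤ lam i)
    (hlam_nonneg : ∀ i, i < n * k → 0 ≤ lam i)
    (hlam_sum : ∑ i ∈ Finset.range (n * k), lam i = 1)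
    (x : ℕ → ℝ)
    (hx_mono : ∀ i j, i ≤ j → j < r → x j ≤ x i)
    (hx_pos : ∀ i, i < r → 0 < x i)
    (hx_sum : ∑ i ∈ Finset.range r, x i = 1)
    (η : ℕ → ℝ)
    (hη_inter : ∀ i, i + 1 < r → x (i + 1) ≤ η i ∧ η i ≤ x i)
    (hη_last : η (r - 1) = -∑ i ∈ Finset.range (r - 1), η i)
    (hη_bound : -(1 - 1 / (r : ℝ)) ≤ η (r - 1)) :
    ((k : ℝ) - 1) * lam (n * k - 1) + η (r - 1) * (lam 0 - lam (n * k - 1))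
      ≤ (∑ j ∈ Finset.range r,
            x j * ∑ i ∈ Finset.range (k - 1), lam ((n - 1 - j) * k + 1 + i))
          + (∑ j ∈ Finset.range (r - 1), η j * lam ((n - 1 - j) * k))
          + η (r - 1) * lam 0
    ∧ (((k : ℝ) - 1) / k) * (((k : ℝ) + 1) * lam (n * k - 1) - lam 0)
      ≤ ((k : ℝ) - 1) * lam (n * k - 1) + η (r - 1) * (lam 0 - lam (n * k - 1)) :=
  stmt18_general n k r hr hr2 lam hlam_mono x hx_pos hx_sum η hη_inter hη_last hη_bound
end
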